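/- arXiv:2204.12133 — 5 statements merged into one kernel-verified Lean document; each statement's English description precedes it below -/
import Mathlib

section
/- (Satisfaction Lemma for many-sorted algebra.) For each MSA signature morphism φ : (S,F) → (S',F'), each (S,F)-sentence ρ, and each (S',F')-algebra A', it holds that A' ⊨ φρ if and only if φ↾A' ⊨ ρ. -/
/-!
Induction on the sentence. For equations, evaluating a translated term in `A'` is evaluating
the term in the reduct. For quantifiers, the valuations of the translated variables in `A'` are
exactly the valuations of the original variables in the reduct, and reducing the expansion
`A'.expand θ` along the extended morphism gives the expansion of the reduct by the same `θ`.
-/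

structure MSSignature (S : Type) where
  Op : (n : ℕ) → (Fin n → S) → S → Type

structure MSAlgebra {S : Type} (Sig : MSSignature S) where
  carrier : S → Type
  op : ∀ {n : ℕ} {ar : Fin n → S} {s : S}, Sig.Op n ar s → (∀ i, carrier (ar i)) → carrier s

inductive MSTerm {S : Type} (Sig : MSSignature S) : S → Type where
  | app {n : ℕ} {ar : Fin n → S} {s : S} (σ : Sig.Op n ar s)
      (args : ∀ i, MSTerm Sig (ar i)) : MSTerm Sig s

def MSAlgebra.eval {S : Type} {Sig : MSSignature S} (A : MSAlgebra Sig) :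
    ∀ {s : S}, MSTerm Sig s → A.carrier s
  | _, .app σ args => A.op σ (fun i => A.eval (args i))

structure MSHom {S : Type} {Sig : MSSignature S} (A B : MSAlgebra Sig) where
  toFun : ∀ s, A.carrier s → B.carrier s
  map_op : ∀ {n : ℕ} {ar : Fin n → S} {s : S} (σ : Sig.Op n ar s) (args : ∀ i, A.carrier (ar i)),
    toFun s (A.op σ args) = B.op σ (fun i => toFun (ar i) (args i))

def MSHom.id {S : Type} {Sig : MSSignature S} (A : MSAlgebra Sig) : MSHom A A :=
  ⟨fun _ a => a, fun _ _ => rfl⟩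

def MSHom.comp {S : Type} {Sig : MSSignature S} {A B C : MSAlgebra Sig}
    (h : MSHom A B) (g : MSHom B C) : MSHom A C where
  toFun s a := g.toFun s (h.toFun s a)
  map_op σ args := by
    show g.toFun _ (h.toFun _ (A.op σ args)) = _
    rw [h.map_op, g.map_op]

def termAlgebra {S : Type} (Sig : MSSignature S) : MSAlgebra Sig where
  carrier := MSTerm Sig
  op σ args := .app σ args
def MSSignature.extend {S : Type} (Sig : MSSignature S) (V : Type) (vs : V → S) :
    MSSignature S where
  Op n ar s := Sig.Op n ar s ⊕ {v : V // vs v = s ∧ n = 0}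

def MSAlgebra.expand {S : Type} {Sig : MSSignature S} (A : MSAlgebra Sig)
    {V : Type} {vs : V → S} (θ : ∀ v, A.carrier (vs v)) :
    MSAlgebra (Sig.extend V vs) where
  carrier := A.carrier
  op := fun σ args =>
    match σ with
    | Sum.inl σ => A.op σ args
    | Sum.inr ⟨v, hv, _⟩ => hv ▸ θ v

inductive MSSentence {S : Type} : MSSignature S → Type 1 where
  | eq {Sig : MSSignature S} {s : S} (t t' : MSTerm Sig s) : MSSentence Sig
  | and {Sig : MSSignature S} (a b : MSSentence Sig) : MSSentence Sig
  | or {Sig : MSSignature S} (a b : MSSentence Sig) : MSSentence Sig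
  | imp {Sig : MSSignature S} (a b : MSSentence Sig) : MSSentence Sig
  | not {Sig : MSSignature S} (a : MSSentence Sig) : MSSentence Sig
  | all {Sig : MSSignature S} (V : Type) (vs : V → S)
      (ρ : MSSentence (Sig.extend V vs)) : MSSentence Sig
  | ex {Sig : MSSignature S} (V : Type) (vs : V → S)
      (ρ : MSSentence (Sig.extend V vs)) : MSSentence Sig

def MSSatisfies {S : Type} : ∀ {Sig : MSSignature S}, MSAlgebra Sig → MSSentence Sig → Prop
  | _, A, .eq t t' => A.eval t = A.eval t'
  | _, A, .and a b => MSSatisfies A a ∧ MSSatisfies A b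
  | _, A, .or a b => MSSatisfies A a ∨ MSSatisfies A b
  | _, A, .imp a b => MSSatisfies A a → MSSatisfies A b
  | _, A, .not a => ¬ MSSatisfies A a
  | _, A, .all _ _ ρ => ∀ θ, MSSatisfies (A.expand θ) ρ
  | _, A, .ex _ _ ρ => ¬ ∀ θ, ¬ MSSatisfies (A.expand θ) ρ

structure MSSigMorphism {S S' : Type} (Sig : MSSignature S) (Sig' : MSSignature S') where
  sortMap : S → S'
  opMap : ∀ {n : ℕ} {ar : Fin n → S} {s : S},
    Sig.Op n ar s → Sig'.Op n (sortMap ∘ ar) (sortMap s)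

def MSSigMorphism.reduct {S S' : Type} {Sig : MSSignature S} {Sig' : MSSignature S'}
    (φ : MSSigMorphism Sig Sig') (A' : MSAlgebra Sig') : MSAlgebra Sig where
  carrier s := A'.carrier (φ.sortMap s)
  op σ args := A'.op (φ.opMap σ) args

def MSTerm.translate {S S' : Type} {Sig : MSSignature S} {Sig' : MSSignature S'}
    (φ : MSSigMorphism Sig Sig') : ∀ {s : S}, MSTerm Sig s → MSTerm Sig' (φ.sortMap s)
  | _, .app σ args => .app (φ.opMap σ) (fun i => (args i).translate φ)

def MSSigMorphism.extend {S S' : Type} {Sig : MSSignature S} {Sig' : MSSignature S'}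
    (φ : MSSigMorphism Sig Sig') (V : Type) (vs : V → S) :
    MSSigMorphism (Sig.extend V vs) (Sig'.extend V (φ.sortMap ∘ vs)) where
  sortMap := φ.sortMap
  opMap := fun σ =>
    match σ with
    | Sum.inl σ => Sum.inl (φ.opMap σ)
    | Sum.inr ⟨v, hv, hn⟩ => Sum.inr ⟨v, by simp [hv], hn⟩

def MSSentence.translate {S S' : Type} :
    ∀ {Sig : MSSignature S} {Sig' : MSSignature S'},
      MSSigMorphism Sig Sig' → MSSentence Sig → MSSentence Sig'
  | _, _, φ, .eq t t' => .eq (t.translate φ) (t'.translate φ)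
  | _, _, φ, .and a b => .and (a.translate φ) (b.translate φ)
  | _, _, φ, .or a b => .or (a.translate φ) (b.translate φ)
  | _, _, φ, .imp a b => .imp (a.translate φ) (b.translate φ)
  | _, _, φ, .not a => .not (a.translate φ)
  | _, _, φ, .all V vs ρ => .all V (φ.sortMap ∘ vs) (ρ.translate (φ.extend V vs))
  | _, _, φ, .ex V vs ρ => .ex V (φ.sortMap ∘ vs) (ρ.translate (φ.extend V vs))

section

variable {S S' : Type} {Sig : MSSignature S} {Sig' : MSSignature S'} (φ : MSSigMorphism Sig Sig')

theorem MSTerm.eval_translate (A' : MSAlgebra Sig') {s : S} (t : MSTerm Sig s) :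
    A'.eval (t.translate φ) = (φ.reduct A').eval t := by
  induction t with
  | app σ args ih => exact congrArg (A'.op (φ.opMap σ)) (funext ih)

/-- `extend` builds its subtype proof with an auxiliary theorem, on which `match` does not
reduce; this equation (by proof irrelevance) exposes the `And` constructor again. -/
theorem MSSigMorphism.extend_opMap_inr {V : Type} {vs : V → S} {n : ℕ} {ar : Fin n → S} {s : S}
    (v : V) (hv : vs v = s) (hn : n = 0) :
    (φ.extend V vs).opMap (ar := ar) (Sum.inr ⟨v, hv, hn⟩) =
      Sum.inr ⟨v, congrArg φ.sortMap hv, hn⟩ :=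
  rfl

theorem MSSigMorphism.reduct_expand (A' : MSAlgebra Sig') {V : Type} {vs : V → S}
    (θ : ∀ v, (φ.reduct A').carrier (vs v)) :
    (φ.extend V vs).reduct (A'.expand θ) = (φ.reduct A').expand θ := by
  show MSAlgebra.mk _ _ = MSAlgebra.mk _ _
  congr 1
  funext n ar s σ args
  rcases σ with σ | ⟨v, rfl, hn⟩
  · rfl
  · exact congrArg (fun τ => (A'.expand θ).op τ args) (φ.extend_opMap_inr v rfl hn)

end

/-- the Satisfaction Lemma for many-sorted algebra. -/
theorem stmt3 {S S' : Type} {Sig : MSSignature S} {Sig' : MSSignature S'}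
    (φ : MSSigMorphism Sig Sig') (ρ : MSSentence Sig) (A' : MSAlgebra Sig') :
    MSSatisfies A' (ρ.translate φ) ↔ MSSatisfies (φ.reduct A') ρ := by
  induction ρ generalizing S' with
  | eq t t' => exact Eq.congr (t.eval_translate φ A') (t'.eval_translate φ A')
  | and a b iha ihb => exact and_congr (iha φ A') (ihb φ A')
  | or a b iha ihb => exact or_congr (iha φ A') (ihb φ A')
  | imp a b iha ihb => exact imp_congr (iha φ A') (ihb φ A')
  | not a iha => exact not_congr (iha φ A')
  | all V vs ρ ih =>
    exact forall_congr' fun θ => φ.reduct_expand A' θ ▸ ih (φ.extend V vs) (A'.expand θ)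
  | ex V vs ρ ih =>
    exact not_congr <| forall_congr' fun θ =>
      not_congr <| φ.reduct_expand A' θ ▸ ih (φ.extend V vs) (A'.expand θ)
end

section
/- Let Γ be a set of (D,S,F)-transitions and B a (D∪S,F)-algebra. Then the preordered algebra (B, ⟶*_{Γ/B}) satisfies every transition in Γ: for each ∀X. H ⇒ (t → t') in Γ and each valuation θ : X → B such that θu = θu' for every equation (u = u') ∈ H^eq and θu ⟶*_{Γ/B} θu' for every transition atom (u → u') ∈ H^tr, it holds that θt ⟶*_{Γ/B} θt'. -/
/-! Preordered algebra (POA) -/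

structure POASignature where
  Sorts : Type
  isSys : Sorts → Bool
  sig : MSSignature Sorts

structure POAlgebra (P : POASignature) extends MSAlgebra P.sig where
  le : ∀ s, P.isSys s = true → carrier s → carrier s → Prop
  le_refl : ∀ s (hs : P.isSys s = true) (a : carrier s), le s hs a a
  le_trans : ∀ s (hs : P.isSys s = true) (a b c : carrier s),
    le s hs a b → le s hs b c → le s hs a c
  monotone : ∀ {n : ℕ} {ar : Fin n → P.Sorts} {s : P.Sorts}
      (σ : P.sig.Op n ar s) (hs : P.isSys s = true)
      (args args' : ∀ i, carrier (ar i)),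
      (∀ i, if h : P.isSys (ar i) = true
            then le (ar i) h (args i) (args' i) else args i = args' i) →
      le s hs (op σ args) (op σ args')

/-- A "model" over any signature with the sorts of `P`: an algebra together with a
family of binary relations on the system-sorted carriers (no axioms required);
used to define satisfaction, including for expansions by variables. -/
structure POAModel (P : POASignature) (Sig : MSSignature P.Sorts) where
  alg : MSAlgebra Sig
  le : ∀ s, P.isSys s = true → alg.carrier s → alg.carrier s → Prop

def POAlgebra.toModel {P : POASignature} (A : POAlgebra P) : POAModel P P.sig :=
  ⟨A.toMSAlgebra, A.le⟩

def POAModel.expand {P : POASignature} {Sig : MSSignature P.Sorts} (M : POAModel P Sig)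
    {V : Type} {vs : V → P.Sorts} (θ : ∀ v, M.alg.carrier (vs v)) :
    POAModel P (Sig.extend V vs) :=
  ⟨M.alg.expand θ, M.le⟩

inductive POASentence (P : POASignature) : MSSignature P.Sorts → Type 1 where
  | eq {Sig : MSSignature P.Sorts} {s : P.Sorts} (t t' : MSTerm Sig s) : POASentence P Sig
  | tr {Sig : MSSignature P.Sorts} {s : P.Sorts} (hs : P.isSys s = true)
      (t t' : MSTerm Sig s) : POASentence P Sig
  | and {Sig : MSSignature P.Sorts} (a b : POASentence P Sig) : POASentence P Sig
  | or {Sig : MSSignature P.Sorts} (a b : POASentence P Sig) : POASentence P Sig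
  | imp {Sig : MSSignature P.Sorts} (a b : POASentence P Sig) : POASentence P Sig
  | not {Sig : MSSignature P.Sorts} (a : POASentence P Sig) : POASentence P Sig
  | all {Sig : MSSignature P.Sorts} (V : Type) (vs : V → P.Sorts)
      (ρ : POASentence P (Sig.extend V vs)) : POASentence P Sig
  | ex {Sig : MSSignature P.Sorts} (V : Type) (vs : V → P.Sorts)
      (ρ : POASentence P (Sig.extend V vs)) : POASentence P Sig

def POASat {P : POASignature} :
    ∀ {Sig : MSSignature P.Sorts}, POAModel P Sig → POASentence P Sig → Prop
  | _, M, .eq t t' => M.alg.eval t = M.alg.eval t'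
  | _, M, .tr hs t t' => M.le _ hs (M.alg.eval t) (M.alg.eval t')
  | _, M, .and a b => POASat M a ∧ POASat M b
  | _, M, .or a b => POASat M a ∨ POASat M b
  | _, M, .imp a b => POASat M a → POASat M b
  | _, M, .not a => ¬ POASat M a
  | _, M, .all _ _ ρ => ∀ θ, POASat (M.expand θ) ρ
  | _, M, .ex _ _ ρ => ¬ ∀ θ, ¬ POASat (M.expand θ) ρ

structure POASigMorphism (P P' : POASignature) where
  toMS : MSSigMorphism P.sig P'.sig
  sys_pres : ∀ s, P'.isSys (toMS.sortMap s) = P.isSys s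

def POASigMorphism.reductModel {P P' : POASignature} (φ : POASigMorphism P P')
    (M' : POAModel P' P'.sig) : POAModel P P.sig where
  alg := φ.toMS.reduct M'.alg
  le s hs := M'.le (φ.toMS.sortMap s) (by rw [φ.sys_pres]; exact hs)

def POASentence.translate {P P' : POASignature} :
    ∀ {Sig : MSSignature P.Sorts} {Sig' : MSSignature P'.Sorts}
      (f : MSSigMorphism Sig Sig'),
      (∀ s, P'.isSys (f.sortMap s) = P.isSys s) →
      POASentence P Sig → POASentence P' Sig'
  | _, _, f, _, .eq t t' => .eq (t.translate f) (t'.translate f)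
  | _, _, f, hf, .tr hs t t' => .tr (by rw [hf]; exact hs) (t.translate f) (t'.translate f)
  | _, _, f, hf, .and a b => .and (a.translate f hf) (b.translate f hf)
  | _, _, f, hf, .or a b => .or (a.translate f hf) (b.translate f hf)
  | _, _, f, hf, .imp a b => .imp (a.translate f hf) (b.translate f hf)
  | _, _, f, hf, .not a => .not (a.translate f hf)
  | _, _, f, hf, .all V vs ρ => .all V (f.sortMap ∘ vs) (ρ.translate (f.extend V vs) hf)
  | _, _, f, hf, .ex V vs ρ => .ex V (f.sortMap ∘ vs) (ρ.translate (f.extend V vs) hf)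

def POASigMorphism.sen {P P' : POASignature} (φ : POASigMorphism P P') :
    POASentence P P.sig → POASentence P' P'.sig :=
  fun ρ => ρ.translate φ.toMS φ.sys_pres
/-! Algebraic rewriting -/

/-- Sorted binary relations on the carriers of an algebra. -/
def SortedRel {S : Type} {Sig : MSSignature S} (B : MSAlgebra Sig) : Type :=
  ∀ s, B.carrier s → B.carrier s → Prop

/-- Sortwise reflexive-transitive closure. -/
def rtc {S : Type} {Sig : MSSignature S} {B : MSAlgebra Sig} (R : SortedRel B) : SortedRel B :=
  fun s => Relation.ReflTransGen (R s)

/-- A (D,S,F)-transition: a Horn sentence `∀X. H ⇒ (t → t')` where `H` is a finite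
conjunction of equational atoms and of transition atoms (the latter at system sorts),
and `t, t'` are terms of the same system sort. -/
structure TransitionRule (P : POASignature) where
  V : Type
  vs : V → P.Sorts
  eqCond : Set (Σ s : P.Sorts, MSTerm (P.sig.extend V vs) s × MSTerm (P.sig.extend V vs) s)
  trCond : Set (Σ s : P.Sorts, MSTerm (P.sig.extend V vs) s × MSTerm (P.sig.extend V vs) s)
  eqCond_finite : eqCond.Finite
  trCond_finite : trCond.Finite
  trCond_sys : ∀ e ∈ trCond, P.isSys e.1 = true
  sort : P.Sorts
  sort_sys : P.isSys sort = true
  lhs : MSTerm (P.sig.extend V vs) sort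
  rhs : MSTerm (P.sig.extend V vs) sort

/-- Number of occurrences of the extra variables in a term over an extended signature. -/
def varCount {S : Type} {Sig : MSSignature S} {V : Type} {vs : V → S} :
    ∀ {s : S}, MSTerm (Sig.extend V vs) s → ℕ
  | _, .app σ args =>
      (match σ with
        | Sum.inl _ => 0
        | Sum.inr _ => 1) + ∑ i, varCount (args i)

/-- A rewriting context: a term over the signature extended with a single
fresh variable `z` (of sort `zs`), with exactly one occurrence of `z`. -/
def IsContext {S : Type} {Sig : MSSignature S} {zs s : S}
    (c : MSTerm (Sig.extend Unit (fun _ => zs)) s) : Prop :=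
  varCount c = 1

/-- The function `B_c` induced by a context. -/
def applyCtx {S : Type} {Sig : MSSignature S} (B : MSAlgebra Sig) {zs s : S}
    (c : MSTerm (Sig.extend Unit (fun _ => zs)) s) (b : B.carrier zs) : B.carrier s :=
  (B.expand (fun _ => b)).eval c

/-- `Γ(Ω)` : one application of a rule of `Γ` inside a context, with the equational
conditions holding on the nose and the transition conditions holding in `Ω`. -/
def GammaOf {P : POASignature} (Γ : Set (TransitionRule P)) (B : MSAlgebra P.sig)
    (Ω : SortedRel B) : SortedRel B :=
  fun s b b' =>
    P.isSys s = true ∧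
    ∃ r ∈ Γ, ∃ c : MSTerm (P.sig.extend Unit (fun _ => r.sort)) s,
      IsContext c ∧
      ∃ θ : ∀ v, B.carrier (r.vs v),
        (∀ e ∈ r.eqCond, (B.expand θ).eval e.2.1 = (B.expand θ).eval e.2.2) ∧
        (∀ e ∈ r.trCond, Ω e.1 ((B.expand θ).eval e.2.1) ((B.expand θ).eval e.2.2)) ∧
        b = applyCtx B c ((B.expand θ).eval r.lhs) ∧
        b' = applyCtx B c ((B.expand θ).eval r.rhs)

/-- The relations `Γ_{B,k}`. -/
def GammaIter {P : POASignature} (Γ : Set (TransitionRule P)) (B : MSAlgebra P.sig) :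
    ℕ → SortedRel B
  | 0 => fun _ => Eq
  | k + 1 => fun s b b' =>
      rtc (GammaIter Γ B k) s b b' ∨ GammaOf Γ B (rtc (GammaIter Γ B k)) s b b'

/-- `b ⟶_{Γ/B} b'`. -/
def oneStep {P : POASignature} (Γ : Set (TransitionRule P)) (B : MSAlgebra P.sig) :
    SortedRel B :=
  fun s b b' => ∃ k, GammaOf Γ B (rtc (GammaIter Γ B k)) s b b'

/-- `b ⟶*_{Γ/B} b'`, the algebraic rewriting relation. -/
def rew {P : POASignature} (Γ : Set (TransitionRule P)) (B : MSAlgebra P.sig) :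
    SortedRel B :=
  rtc (oneStep Γ B)

/-- Satisfaction of a transition rule by an algebra equipped with a sorted relation. -/
def SatRule {P : POASignature} (B : MSAlgebra P.sig) (le : SortedRel B)
    (r : TransitionRule P) : Prop :=
  ∀ θ : ∀ v, B.carrier (r.vs v),
    (∀ e ∈ r.eqCond, (B.expand θ).eval e.2.1 = (B.expand θ).eval e.2.2) →
    (∀ e ∈ r.trCond, le e.1 ((B.expand θ).eval e.2.1) ((B.expand θ).eval e.2.2)) →
    le r.sort ((B.expand θ).eval r.lhs) ((B.expand θ).eval r.rhs)

/-- The sorted relation of a preordered algebra (trivial at data sorts). -/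
def POAlgebra.relOf {P : POASignature} (A : POAlgebra P) : SortedRel A.toMSAlgebra :=
  fun s a a' => ∀ hs : P.isSys s = true, A.le s hs a a'

/-- A homomorphism of algebras-with-sorted-relations, monotone on system sorts
(the notion of POA homomorphism). -/
structure MonHom {P : POASignature} (B : MSAlgebra P.sig) (rB : SortedRel B)
    (C : MSAlgebra P.sig) (rC : SortedRel C) extends MSHom B C where
  mono : ∀ s, P.isSys s = true → ∀ b b', rB s b b' → rC s (toFun s b) (toFun s b')

/-- A conditional equation `∀X. H ⇒ (lhs = rhs)`. -/
structure CondEq {S : Type} (Sig : MSSignature S) where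
  V : Type
  vs : V → S
  cond : Set (Σ s : S, MSTerm (Sig.extend V vs) s × MSTerm (Sig.extend V vs) s)
  cond_finite : cond.Finite
  sort : S
  lhs : MSTerm (Sig.extend V vs) sort
  rhs : MSTerm (Sig.extend V vs) sort

def SatCondEq {S : Type} {Sig : MSSignature S} (B : MSAlgebra Sig) (e : CondEq Sig) : Prop :=
  ∀ θ : ∀ v, B.carrier (e.vs v),
    (∀ c ∈ e.cond, (B.expand θ).eval c.2.1 = (B.expand θ).eval c.2.2) →
    (B.expand θ).eval e.lhs = (B.expand θ).eval e.rhs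

/-!
Every `⟶*_{Γ/B}` derivation lives in `(Γ_{B,k})*` for some `k`, and these relations increase
with `k`. A rule has only finitely many transition conditions, so a single stage `K` serves all
of them, and the rule applied in the trivial context `z` is then one `⟶_{Γ/B}` step at stage `K`.
-/

open Relation Filter

section Context

variable {S : Type} {Sig : MSSignature S}

/-- The context `z` itself. -/
def holeContext (zs : S) : MSTerm (Sig.extend Unit fun _ => zs) zs :=
  .app (n := 0) (ar := Fin.elim0) (Sum.inr ⟨(), rfl, rfl⟩) (fun i => i.elim0)

lemma isContext_holeContext (zs : S) : IsContext (Sig := Sig) (holeContext zs) := by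
  simp [IsContext, holeContext, varCount]

lemma applyCtx_holeContext (B : MSAlgebra Sig) (zs : S) (b : B.carrier zs) :
    applyCtx B (holeContext zs) b = b := by
  simp only [applyCtx, holeContext, MSAlgebra.eval, MSAlgebra.expand]
  split <;> simp_all

end Context

section Rewriting

variable {P : POASignature} (Γ : Set (TransitionRule P)) (B : MSAlgebra P.sig)

lemma gammaOf_of_mem {Ω : SortedRel B} {r : TransitionRule P} (hr : r ∈ Γ)
    (θ : ∀ v, B.carrier (r.vs v))
    (heq : ∀ e ∈ r.eqCond, (B.expand θ).eval e.2.1 = (B.expand θ).eval e.2.2)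
    (htr : ∀ e ∈ r.trCond, Ω e.1 ((B.expand θ).eval e.2.1) ((B.expand θ).eval e.2.2)) :
    GammaOf Γ B Ω r.sort ((B.expand θ).eval r.lhs) ((B.expand θ).eval r.rhs) :=
  ⟨r.sort_sys, r, hr, holeContext r.sort, isContext_holeContext r.sort, θ, heq, htr,
    (applyCtx_holeContext B r.sort _).symm, (applyCtx_holeContext B r.sort _).symm⟩

lemma monotone_gammaIter (s : P.Sorts) : Monotone fun k => GammaIter Γ B k s :=
  monotone_nat_of_le_succ fun _ _ _ h => Or.inl (.single h)

lemma eventually_rtc_gammaIter_of_rew {s : P.Sorts} {b b' : B.carrier s}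
    (h : rew Γ B s b b') : ∀ᶠ k in atTop, rtc (GammaIter Γ B k) s b b' := by
  induction h with
  | refl => exact .of_forall fun _ => .refl
  | tail _ hstep ih =>
    obtain ⟨k, hk⟩ := hstep
    filter_upwards [ih, eventually_ge_atTop (k + 1)] with k' hrtc hk'
    exact hrtc.tail (monotone_gammaIter Γ B s hk' _ _ (Or.inr hk))

end Rewriting

/-- `(B, ⟶*_{Γ/B})` satisfies every transition of `Γ`. -/
theorem stmt7 {P : POASignature} (Γ : Set (TransitionRule P)) (B : MSAlgebra P.sig) :
    ∀ r ∈ Γ, SatRule B (rew Γ B) r := by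
  intro r hr θ heq htr
  have hstage : ∀ᶠ k in atTop, ∀ e ∈ r.trCond,
      rtc (GammaIter Γ B k) e.1 ((B.expand θ).eval e.2.1) ((B.expand θ).eval e.2.2) :=
    (eventually_all_finite r.trCond_finite).2 fun e he =>
      eventually_rtc_gammaIter_of_rew Γ B (htr e he)
  obtain ⟨K, hK⟩ := hstage.exists
  exact .single ⟨K, gammaOf_of_mem Γ B hr θ heq hK⟩
end

section
/- (Soundness of the operational semantics.) Let β : B → N be an nf-homomorphism, Γ a β-coherent set of (D,S,F)-transitions, and β' : N → B' any (D∪S,F)-homomorphism. Then β' is a POA homomorphism (N, ⟶*_{Γ/β}) → (B', ⟶*_{Γ/B'}): n1 ⟶*_{Γ/β} n2 implies β'(n1) ⟶*_{Γ/B'} β'(n2). -/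
/-! Normal forms: nf-homomorphisms -/

/-- An nf-homomorphism `β : B → N`: the carriers of `N` are subsets of the carriers
of `B` (realized as subtypes), `N` carries its own algebra structure `nop`,
`nf` (= β) is a homomorphism `B → N` and is the identity on `N`. -/
structure NFData {P : POASignature} (B : MSAlgebra P.sig) where
  mem : ∀ s, Set (B.carrier s)
  nop : ∀ {n : ℕ} {ar : Fin n → P.Sorts} {s : P.Sorts},
    P.sig.Op n ar s → (∀ i, ↥(mem (ar i))) → ↥(mem s)
  nf : ∀ s, B.carrier s → ↥(mem s)
  nf_hom : ∀ {n : ℕ} {ar : Fin n → P.Sorts} {s : P.Sorts}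
    (σ : P.sig.Op n ar s) (args : ∀ i, B.carrier (ar i)),
    nf s (B.op σ args) = nop σ (fun i => nf (ar i) (args i))
  nf_inv : ∀ s (x : ↥(mem s)), nf s (x : B.carrier s) = x

/-- The algebra `N` of an nf-homomorphism. -/
def NFData.Nalg {P : POASignature} {B : MSAlgebra P.sig} (F : NFData B) :
    MSAlgebra P.sig where
  carrier s := ↥(F.mem s)
  op := F.nop

/-- `β` as a homomorphism `B → N`. -/
def NFData.hom {P : POASignature} {B : MSAlgebra P.sig} (F : NFData B) :
    MSHom B F.Nalg where
  toFun := F.nf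
  map_op := F.nf_hom

/-- The relation `⟶_{Γ/β}` on `N`. -/
def NFData.stepβ {P : POASignature} {B : MSAlgebra P.sig} (F : NFData B)
    (Γ : Set (TransitionRule P)) : SortedRel F.Nalg :=
  fun s n1 n2 => ∃ b2, oneStep Γ B s (Subtype.val n1) b2 ∧ F.nf s b2 = n2

/-- The relation `⟶*_{Γ/β}` on `N`. -/
def NFData.rewβ {P : POASignature} {B : MSAlgebra P.sig} (F : NFData B)
    (Γ : Set (TransitionRule P)) : SortedRel F.Nalg :=
  rtc (F.stepβ Γ)

/-- `Γ` is `β`-coherent. -/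
def Coherent {P : POASignature} {B : MSAlgebra P.sig} (F : NFData B)
    (Γ : Set (TransitionRule P)) : Prop :=
  ∀ s b1 b2, oneStep Γ B s b1 b2 → F.rewβ Γ s (F.nf s b1) (F.nf s b2)

/-- The term `c` (a constant applied to no arguments) over an extended signature. -/
def constTerm {S : Type} {Sig : MSSignature S} {V : Type} {vs : V → S}
    {ar : Fin 0 → S} {s : S} (c : Sig.Op 0 ar s) : MSTerm (Sig.extend V vs) s :=
  .app (Sum.inl c) (fun i => i.elim0)

/-- The value `B_c` of a constant `c` in `B`. -/
def constVal {S : Type} {Sig : MSSignature S} (B : MSAlgebra Sig)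
    {ar : Fin 0 → S} {s : S} (c : Sig.Op 0 ar s) : B.carrier s :=
  B.op c (fun i => i.elim0)

/-- Condition (i): each rule of `Γ` has only equational conditions, each of the
form `t_i = c_i` with `c_i` a constant whose value in `B` lies in `N`. -/
def CondConstants {P : POASignature} {B : MSAlgebra P.sig} (F : NFData B)
    (Γ : Set (TransitionRule P)) : Prop :=
  ∀ r ∈ Γ, r.trCond = ∅ ∧
    ∀ e ∈ r.eqCond, ∃ (ar : Fin 0 → P.Sorts) (c : P.sig.Op 0 ar e.1),
      e.2.2 = constTerm c ∧ constVal B c ∈ F.mem e.1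

/-- No junk at sort `s`: every element of `B_s` is the value of a constant lying in `N`. -/
def NoJunk {P : POASignature} {B : MSAlgebra P.sig} (F : NFData B) (s : P.Sorts) : Prop :=
  ∀ b : B.carrier s, ∃ (ar : Fin 0 → P.Sorts) (c : P.sig.Op 0 ar s),
    constVal B c ∈ F.mem s ∧ constVal B c = b

/-- No confusion at sort `s`: distinct constants with value in `N` have distinct values. -/
def NoConfusion {P : POASignature} {B : MSAlgebra P.sig} (F : NFData B) (s : P.Sorts) : Prop :=
  ∀ (ar ar' : Fin 0 → P.Sorts) (c : P.sig.Op 0 ar s) (c' : P.sig.Op 0 ar' s),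
    constVal B c ∈ F.mem s → constVal B c' ∈ F.mem s →
    constVal B c = constVal B c' → HEq c c'

/-- Condition (ii): no junk and no confusion at every sort of an equation occurring
in a condition of a rule of `Γ`. -/
def CondProtected {P : POASignature} {B : MSAlgebra P.sig} (F : NFData B)
    (Γ : Set (TransitionRule P)) : Prop :=
  ∀ r ∈ Γ, ∀ e ∈ r.eqCond, NoJunk F e.1 ∧ NoConfusion F e.1

/-! A homomorphism commutes with the evaluation of terms under valuations, hence with contexts
and with every relation `Γ(Ω)` whose transition conditions it preserves. By induction on `k` it
preserves the relations `Γ_{B,k}`, hence `⟶_{Γ/B}`. A step `n₁ ⟶_{Γ/β} n₂` is witnessed by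
`n₁ ⟶_{Γ/B} b₂` with `β b₂ = n₂`; applying `β' ∘ β`, and using `β n₁ = n₁`, gives
`β' n₁ ⟶_{Γ/B'} β' n₂`. -/

namespace MSHom

section

variable {S : Type} {Sig : MSSignature S} {B C : MSAlgebra Sig} (h : MSHom B C)

theorem map_eval_expand {V : Type} {vs : V → S} (θ : ∀ v, B.carrier (vs v)) :
    ∀ {s : S} (t : MSTerm (Sig.extend V vs) s),
      h.toFun s ((B.expand θ).eval t) = (C.expand (fun v => h.toFun (vs v) (θ v))).eval t
  | _, .app (.inl σ) args =>
      (h.map_op σ _).trans (congrArg (C.op σ) (funext fun i => map_eval_expand θ (args i)))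
  | _, .app (.inr ⟨_, rfl, _⟩) _ => rfl

theorem map_applyCtx {zs s : S} (c : MSTerm (Sig.extend Unit (fun _ => zs)) s)
    (b : B.carrier zs) : h.toFun s (applyCtx B c b) = applyCtx C c (h.toFun zs b) :=
  h.map_eval_expand (fun _ => b) c

theorem map_rtc {R : SortedRel B} {R' : SortedRel C}
    (hR : ∀ s b b', R s b b' → R' s (h.toFun s b) (h.toFun s b')) {s : S} {b b' : B.carrier s}
    (hbb : rtc R s b b') : rtc R' s (h.toFun s b) (h.toFun s b') :=
  hbb.lift (h.toFun s) (hR s)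

end

section

variable {P : POASignature} (Γ : Set (TransitionRule P)) {B B' : MSAlgebra P.sig}
  (h : MSHom B B')

theorem map_gammaOf {Ω : SortedRel B} {Ω' : SortedRel B'}
    (hΩ : ∀ s b b', Ω s b b' → Ω' s (h.toFun s b) (h.toFun s b')) {s : P.Sorts}
    {b b' : B.carrier s} (hbb : GammaOf Γ B Ω s b b') :
    GammaOf Γ B' Ω' s (h.toFun s b) (h.toFun s b') := by
  obtain ⟨hs, r, hr, c, hc, θ, heq, htr, rfl, rfl⟩ := hbb
  refine ⟨hs, r, hr, c, hc, fun v => h.toFun (r.vs v) (θ v), fun e he => ?_, fun e he => ?_,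
    ?_, ?_⟩
  · rw [← h.map_eval_expand, ← h.map_eval_expand, heq e he]
  · rw [← h.map_eval_expand, ← h.map_eval_expand]
    exact hΩ _ _ _ (htr e he)
  · exact (h.map_applyCtx c _).trans (congrArg (applyCtx B' c) (h.map_eval_expand θ r.lhs))
  · exact (h.map_applyCtx c _).trans (congrArg (applyCtx B' c) (h.map_eval_expand θ r.rhs))

theorem map_gammaIter (k : ℕ) {s : P.Sorts} {b b' : B.carrier s}
    (hbb : GammaIter Γ B k s b b') : GammaIter Γ B' k s (h.toFun s b) (h.toFun s b') := by
  induction k generalizing s b b' with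
  | zero => exact congrArg _ hbb
  | succ k ih =>
      exact hbb.imp (h.map_rtc fun _ _ _ => ih)
        (h.map_gammaOf Γ fun _ _ _ => h.map_rtc fun _ _ _ => ih)

theorem map_oneStep {s : P.Sorts} {b b' : B.carrier s} (hbb : oneStep Γ B s b b') :
    oneStep Γ B' s (h.toFun s b) (h.toFun s b') :=
  let ⟨k, hk⟩ := hbb
  ⟨k, h.map_gammaOf Γ (fun _ _ _ => h.map_rtc fun _ _ _ => h.map_gammaIter Γ k) hk⟩

end

end MSHom

theorem NFData.map_stepβ {P : POASignature} (Γ : Set (TransitionRule P))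
    {B B' : MSAlgebra P.sig}
    (F : NFData B) (β' : MSHom F.Nalg B') {s : P.Sorts} {n₁ n₂ : F.Nalg.carrier s}
    (hn : F.stepβ Γ s n₁ n₂) : oneStep Γ B' s (β'.toFun s n₁) (β'.toFun s n₂) := by
  obtain ⟨b₂, hstep, rfl⟩ := hn
  have hβ : (F.hom.comp β').toFun s n₁.val = β'.toFun s n₁ :=
    congrArg (β'.toFun s) (F.nf_inv s n₁)
  have hstep' := (F.hom.comp β').map_oneStep Γ hstep
  rwa [hβ] at hstep'

theorem stmt11_general {P : POASignature} (Γ : Set (TransitionRule P)) (B B' : MSAlgebra P.sig)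
    (F : NFData B) (β' : MSHom F.Nalg B') :
    ∀ s, P.isSys s = true → ∀ n1 n2, F.rewβ Γ s n1 n2 →
      rew Γ B' s (β'.toFun s n1) (β'.toFun s n2) := by
  intro s _ n1 n2 hrw
  exact hrw.lift (β'.toFun s) fun _ _ => F.map_stepβ Γ β'

/-- soundness of the operational semantics. -/
theorem stmt11 {P : POASignature} (Γ : Set (TransitionRule P)) (B B' : MSAlgebra P.sig)
    (F : NFData B) (hcoh : Coherent F Γ) (β' : MSHom F.Nalg B') :
    ∀ s, P.isSys s = true → ∀ n1 n2, F.rewβ Γ s n1 n2 →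
      rew Γ B' s (β'.toFun s n1) (β'.toFun s n2) :=
  stmt11_general Γ B B' F β'
end

section
/- (Completeness conditions.) Let β : B → N be an nf-homomorphism and Γ a β-coherent set of (D,S,F)-transitions such that: (i) for each transition ∀X. H ⇒ (t → t') in Γ, H is a finite conjunction of equations of the form t_i = c_i where each c_i is a constant (operation symbol of empty arity) with B_{c_i} ∈ N; (ii) for each sort s of such an equation t_i = c_i, every element of B_s equals B_c for some constant c ∈ F_{→s} with B_c ∈ N (no junk), and B_c ≠ B_{c'} for all distinct constants c, c' ∈ F_{→s} with B_c, B_{c'} ∈ N (no confusion). Then the preordered algebra (N, ⟶*_{Γ/β}) satisfies every transition in Γ. -/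
/-! A rule of `Γ` can be applied at the root in `B` to any valuation `θ` in `N ⊆ B` satisfying its
conditions in `N`: a condition `t_i = c_i` that holds in `N` holds in `B`, because no junk puts
`θ t_i` in `N`, where `β` is the identity, and `B_{c_i} ∈ N` as well. That top-level step
`θ t ⟶_{Γ/B} θ t'` is mapped by `β`-coherence to `θ t ⟶*_{Γ/β} θ t'`, since `β` commutes with
evaluation and fixes `θ`. -/

namespace NFData

variable {P : POASignature} {B : MSAlgebra P.sig} (F : NFData B)

lemma nf_eval {V : Type} {vs : V → P.Sorts} (θ : ∀ v, F.Nalg.carrier (vs v)) :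
    ∀ {s : P.Sorts} (t : MSTerm (P.sig.extend V vs) s),
      F.nf s ((B.expand (fun v => (θ v).val)).eval t) = (F.Nalg.expand θ).eval t
  | _, .app (.inl σ) args => by
      show F.nf _ (B.op σ _) = F.nop σ _
      exact (F.nf_hom σ _).trans <| congrArg (F.nop σ) (funext fun i => nf_eval θ (args i))
  | _, .app (.inr ⟨v, hv, _⟩) _ => by
      cases hv
      exact F.nf_inv _ (θ v)

lemma eq_of_nf_eq {s : P.Sorts} {b b' : B.carrier s} (hb : b ∈ F.mem s) (hb' : b' ∈ F.mem s)
    (h : F.nf s b = F.nf s b') : b = b' := by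
  simpa only [F.nf_inv _ ⟨b, hb⟩, F.nf_inv _ ⟨b', hb'⟩, Subtype.mk.injEq] using h

end NFData

lemma NoJunk.mem {P : POASignature} {B : MSAlgebra P.sig} {F : NFData B} {s : P.Sorts}
    (h : NoJunk F s) (b : B.carrier s) : b ∈ F.mem s := by
  obtain ⟨_, _, hmem, rfl⟩ := h b
  exact hmem

lemma eval_constTerm {S : Type} {Sig : MSSignature S} {V : Type} {vs : V → S}
    (B : MSAlgebra Sig) (θ : ∀ v, B.carrier (vs v)) {ar : Fin 0 → S} {s : S}
    (c : Sig.Op 0 ar s) : (B.expand θ).eval (constTerm c) = constVal B c :=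
  congrArg (B.op c) (funext fun i => i.elim0)

def idCtx {S : Type} (Sig : MSSignature S) (zs : S) :
    MSTerm (Sig.extend Unit (fun _ => zs)) zs :=
  .app (n := 0) (ar := Fin.elim0) (.inr ⟨(), rfl, rfl⟩) (fun i => i.elim0)

lemma isContext_idCtx {S : Type} (Sig : MSSignature S) (zs : S) :
    IsContext (idCtx Sig zs) := by
  simp [IsContext, idCtx, varCount]

lemma applyCtx_idCtx {S : Type} {Sig : MSSignature S} (B : MSAlgebra Sig) {zs : S}
    (b : B.carrier zs) : applyCtx B (idCtx Sig zs) b = b := by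
  simp only [applyCtx, idCtx, MSAlgebra.eval, MSAlgebra.expand]
  split
  · contradiction
  · rfl

lemma oneStep_of_eqCond {P : POASignature} {Γ : Set (TransitionRule P)} {B : MSAlgebra P.sig}
    {r : TransitionRule P} (hr : r ∈ Γ) (htr : r.trCond = ∅) (θ : ∀ v, B.carrier (r.vs v))
    (heq : ∀ e ∈ r.eqCond, (B.expand θ).eval e.2.1 = (B.expand θ).eval e.2.2) :
    oneStep Γ B r.sort ((B.expand θ).eval r.lhs) ((B.expand θ).eval r.rhs) :=
  ⟨0, r.sort_sys, r, hr, idCtx P.sig r.sort, isContext_idCtx _ _, θ, heq,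
    by simp [htr], (applyCtx_idCtx B _).symm, (applyCtx_idCtx B _).symm⟩

lemma eqCond_of_nf {P : POASignature} {Γ : Set (TransitionRule P)} {B : MSAlgebra P.sig}
    {F : NFData B} (hconst : CondConstants F Γ) (hprot : CondProtected F Γ)
    {r : TransitionRule P} (hr : r ∈ Γ) (θ : ∀ v, F.Nalg.carrier (r.vs v))
    (heq : ∀ e ∈ r.eqCond, (F.Nalg.expand θ).eval e.2.1 = (F.Nalg.expand θ).eval e.2.2) :
    ∀ e ∈ r.eqCond, (B.expand (fun v => (θ v).val)).eval e.2.1 =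
      (B.expand (fun v => (θ v).val)).eval e.2.2 := by
  intro e he
  obtain ⟨_, c, hc, hmem⟩ := (hconst r hr).2 e he
  refine F.eq_of_nf_eq ((hprot r hr e he).1.mem _) ?_ ?_
  · rwa [hc, eval_constTerm]
  · rw [F.nf_eval θ, F.nf_eval θ, heq e he]

/-- completeness conditions: `(N, ⟶*_{Γ/β})` satisfies `Γ`. -/
theorem stmt12 {P : POASignature} (Γ : Set (TransitionRule P)) (B : MSAlgebra P.sig)
    (F : NFData B) (hcoh : Coherent F Γ)
    (hconst : CondConstants F Γ) (hprot : CondProtected F Γ) :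
    ∀ r ∈ Γ, SatRule F.Nalg (F.rewβ Γ) r := by
  intro r hr θ heq _
  have hstep := oneStep_of_eqCond hr (hconst r hr).1 _ (eqCond_of_nf hconst hprot hr θ heq)
  simpa only [F.nf_eval θ] using hcoh _ _ _ hstep
end

section
/- Every pushout square in the category of POA signatures and POA signature morphisms is a model amalgamation square. -/
/-! The category of POA signatures, reducts, amalgamation -/

def POASigMorphism.id (P : POASignature) : POASigMorphism P P where
  toMS := ⟨fun s => s, fun σ => σ⟩
  sys_pres _ := rfl

def POASigMorphism.comp {P1 P2 P3 : POASignature}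
    (φ : POASigMorphism P1 P2) (ψ : POASigMorphism P2 P3) : POASigMorphism P1 P3 where
  toMS := ⟨fun s => ψ.toMS.sortMap (φ.toMS.sortMap s),
           fun σ => ψ.toMS.opMap (φ.toMS.opMap σ)⟩
  sys_pres s := by rw [ψ.sys_pres, φ.sys_pres]

/-- Reduct of a preordered algebra along a POA signature morphism. -/
def POASigMorphism.reduct {P P' : POASignature} (φ : POASigMorphism P P')
    (A' : POAlgebra P') : POAlgebra P where
  carrier s := A'.carrier (φ.toMS.sortMap s)
  op σ args := A'.op (φ.toMS.opMap σ) args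
  le s hs := A'.le (φ.toMS.sortMap s) (by rw [φ.sys_pres]; exact hs)
  le_refl s hs a := A'.le_refl _ _ a
  le_trans s hs a b c hab hbc := A'.le_trans _ _ a b c hab hbc
  monotone := by
    intro n ar s σ hs args args' hargs
    refine A'.monotone (φ.toMS.opMap σ) (by rw [φ.sys_pres]; exact hs) args args' ?_
    intro i
    have hi := hargs i
    simp only [Function.comp_apply]
    by_cases hb : P.isSys (ar i) = true
    · rw [dif_pos hb] at hi
      rw [dif_pos (show P'.isSys (φ.toMS.sortMap (ar i)) = true by rw [φ.sys_pres]; exact hb)]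
      exact hi
    · rw [dif_neg hb] at hi
      rw [dif_neg (show ¬ P'.isSys (φ.toMS.sortMap (ar i)) = true by rw [φ.sys_pres]; exact hb)]
      exact hi

/-- Homomorphisms of preordered algebras. -/
structure POAHom {P : POASignature} (A B : POAlgebra P) extends
    MSHom A.toMSAlgebra B.toMSAlgebra where
  mono : ∀ s (hs : P.isSys s = true) a a', A.le s hs a a' → B.le s hs (toFun s a) (toFun s a')

/-- Reduct of a POA homomorphism. -/
def POASigMorphism.reductHom {P P' : POASignature} (φ : POASigMorphism P P')
    {A' B' : POAlgebra P'} (h' : POAHom A' B') : POAHom (φ.reduct A') (φ.reduct B') where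
  toFun s := h'.toFun (φ.toMS.sortMap s)
  map_op σ args := h'.map_op (φ.toMS.opMap σ) args
  mono _s _hs a a' h := h'.mono _ _ a a' h

/-- A model homomorphism packaged with its source and target. -/
structure HomObj (P : POASignature) where
  src : POAlgebra P
  tgt : POAlgebra P
  hom : POAHom src tgt

def POASigMorphism.reductHomObj {P P' : POASignature} (φ : POASigMorphism P P')
    (H : HomObj P') : HomObj P :=
  ⟨φ.reduct H.src, φ.reduct H.tgt, φ.reductHom H.hom⟩

/-- A commutative square of POA signature morphisms is a pushout square. -/
def IsPushoutSquare {P P1 P2 P' : POASignature}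
    (φ1 : POASigMorphism P P1) (φ2 : POASigMorphism P P2)
    (θ1 : POASigMorphism P1 P') (θ2 : POASigMorphism P2 P') : Prop :=
  φ1.comp θ1 = φ2.comp θ2 ∧
  ∀ (Q : POASignature) (ψ1 : POASigMorphism P1 Q) (ψ2 : POASigMorphism P2 Q),
    φ1.comp ψ1 = φ2.comp ψ2 →
    ∃! μ : POASigMorphism P' Q, θ1.comp μ = ψ1 ∧ θ2.comp μ = ψ2

/-- A commutative square of POA signature morphisms is a model amalgamation square:
unique amalgamation of models and of model homomorphisms. -/
def IsAmalgamationSquare {P P1 P2 P' : POASignature}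
    (φ1 : POASigMorphism P P1) (φ2 : POASigMorphism P P2)
    (θ1 : POASigMorphism P1 P') (θ2 : POASigMorphism P2 P') : Prop :=
  (∀ (M1 : POAlgebra P1) (M2 : POAlgebra P2), φ1.reduct M1 = φ2.reduct M2 →
    ∃! M' : POAlgebra P', θ1.reduct M' = M1 ∧ θ2.reduct M' = M2) ∧
  (∀ (H1 : HomObj P1) (H2 : HomObj P2), φ1.reductHomObj H1 = φ2.reductHomObj H2 →
    ∃! H' : HomObj P', θ1.reductHomObj H' = H1 ∧ θ2.reductHomObj H' = H2)

/-!
A preordered `P''`-algebra whose carriers are drawn from a family `K : T → Preord` is the same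
thing as a signature morphism from `P''` into the signature `preordProbe T isSys K`, whose sorts
are labelled by these preorders and whose operations are the monotone maps between them; its
reduct along `θ` corresponds to precomposition with `θ`. Homomorphisms are treated the same way,
with `Arrow Preord` in place of `Preord`. So, given `M1` and `M2` with a common reduct, the
universal property of the pushout applied to the probe built from `M1` and `M2` produces the
amalgamation. Uniqueness follows by testing the universal property against signatures that
label sorts, resp. operations, by propositions: every sort and operation of `P'` comes from
`P1` or from `P2`, so a `P'`-algebra is determined by its two reducts.
-/

open CategoryTheory

theorem MSSigMorphism.ext {S S' : Type} {Sig : MSSignature S} {Sig' : MSSignature S'}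
    {f g : MSSigMorphism Sig Sig'} (hsort : f.sortMap = g.sortMap)
    (hop : ∀ (n : ℕ) (ar : Fin n → S) (s : S) (σ : Sig.Op n ar s),
      HEq (f.opMap σ) (g.opMap σ)) :
    f = g := by
  obtain ⟨fs, fo⟩ := f
  obtain ⟨gs, go⟩ := g
  subst hsort
  obtain rfl : @fo = @go := by
    funext n ar s σ
    exact eq_of_heq (hop n ar s σ)
  rfl

theorem POASigMorphism.ext {P P' : POASignature} {f g : POASigMorphism P P'}
    (h : f.toMS = g.toMS) : f = g := by
  cases f; cases g; subst h; rfl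

theorem POAlgebra.ext {P : POASignature} {A B : POAlgebra P}
    (hop : A.toMSAlgebra = B.toMSAlgebra) (hle : HEq A.le B.le) : A = B := by
  obtain ⟨A, leA⟩ := A
  obtain ⟨B, leB⟩ := B
  subst hop
  cases hle
  rfl

theorem HomObj.ext {P : POASignature} {H K : HomObj P} (hsrc : H.src = K.src)
    (htgt : H.tgt = K.tgt) (hfun : ∀ s, HEq (H.hom.toFun s) (K.hom.toFun s)) : H = K := by
  obtain ⟨A, B, ⟨⟨f, _⟩, _⟩⟩ := H
  obtain ⟨A', B', ⟨⟨g, _⟩, _⟩⟩ := K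
  subst hsrc htgt
  obtain rfl : f = g := funext fun s => eq_of_heq (hfun s)
  rfl

theorem Preord.arrow_mk_eq_of_heq {A A' B B' : Preord} (hA : A = A') (hB : B = B')
    {f : A ⟶ B} {g : A' ⟶ B'} (h : HEq (⇑f) (⇑g)) : Arrow.mk f = Arrow.mk g := by
  subst hA hB
  obtain rfl : f = g := Preord.ext (congrFun (eq_of_heq h))
  rfl

def sortMarkerSig : POASignature :=
  ⟨Prop × Bool, Prod.snd, ⟨fun _ _ _ => PUnit⟩⟩

def opMarkerSig (P : POASignature) : POASignature :=
  ⟨P.Sorts, P.isSys, ⟨fun n ar s => P.sig.Op n ar s × Prop⟩⟩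

namespace IsPushoutSquare

variable {P P1 P2 P' : POASignature}
  {φ1 : POASigMorphism P P1} {φ2 : POASigMorphism P P2}
  {θ1 : POASigMorphism P1 P'} {θ2 : POASigMorphism P2 P'}

theorem hom_ext (hpo : IsPushoutSquare φ1 φ2 θ1 θ2) {Q : POASignature}
    {μ ν : POASigMorphism P' Q} (h1 : θ1.comp μ = θ1.comp ν) (h2 : θ2.comp μ = θ2.comp ν) :
    μ = ν := by
  obtain ⟨_, _, huniq⟩ := hpo.2 Q (θ1.comp ν) (θ2.comp ν) (congrArg (·.comp ν) hpo.1)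
  exact (huniq μ ⟨h1, h2⟩).trans (huniq ν ⟨rfl, rfl⟩).symm

/- Marking the sorts by `p` and by `True` gives two morphisms into `sortMarkerSig` that agree
after `θ1` and after `θ2`. -/
theorem sort_induction (hpo : IsPushoutSquare φ1 φ2 θ1 θ2) (p : P'.Sorts → Prop)
    (h1 : ∀ s1, p (θ1.toMS.sortMap s1)) (h2 : ∀ s2, p (θ2.toMS.sortMap s2)) (s' : P'.Sorts) :
    p s' := by
  let mark (q : P'.Sorts → Prop) : POASigMorphism P' sortMarkerSig :=
    ⟨⟨fun s => (q s, P'.isSys s), fun _ => PUnit.unit⟩, fun _ => rfl⟩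
  have hmark : mark p = mark fun _ => True := by
    refine hpo.hom_ext (POASigMorphism.ext (MSSigMorphism.ext ?_ fun _ _ _ _ => HEq.rfl))
      (POASigMorphism.ext (MSSigMorphism.ext ?_ fun _ _ _ _ => HEq.rfl))
    · exact funext fun s1 => congrArg (·, _) (eq_true (h1 s1))
    · exact funext fun s2 => congrArg (·, _) (eq_true (h2 s2))
  simpa [mark] using
    congrArg (fun χ : POASigMorphism P' sortMarkerSig => (χ.toMS.sortMap s').1) hmark

theorem op_induction (hpo : IsPushoutSquare φ1 φ2 θ1 θ2)
    (p : ∀ {n : ℕ} {ar : Fin n → P'.Sorts} {s : P'.Sorts}, P'.sig.Op n ar s → Prop)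
    (h1 : ∀ {n : ℕ} {ar : Fin n → P1.Sorts} {s : P1.Sorts} (σ : P1.sig.Op n ar s),
      p (θ1.toMS.opMap σ))
    (h2 : ∀ {n : ℕ} {ar : Fin n → P2.Sorts} {s : P2.Sorts} (σ : P2.sig.Op n ar s),
      p (θ2.toMS.opMap σ))
    {n : ℕ} {ar : Fin n → P'.Sorts} {s : P'.Sorts} (σ : P'.sig.Op n ar s) : p σ := by
  let mark (q : ∀ {n : ℕ} {ar : Fin n → P'.Sorts} {s : P'.Sorts}, P'.sig.Op n ar s → Prop) :
      POASigMorphism P' (opMarkerSig P') :=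
    ⟨⟨fun s => s, fun σ => (σ, q σ)⟩, fun _ => rfl⟩
  have hmark : mark p = mark fun _ => True := by
    refine hpo.hom_ext (POASigMorphism.ext (MSSigMorphism.ext rfl fun _ _ _ σ => ?_))
      (POASigMorphism.ext (MSSigMorphism.ext rfl fun _ _ _ σ => ?_))
    · exact heq_of_eq (congrArg (_, ·) (eq_true (h1 σ)))
    · exact heq_of_eq (congrArg (_, ·) (eq_true (h2 σ)))
  simpa [mark] using
    congrArg (fun χ : POASigMorphism P' (opMarkerSig P') => (χ.toMS.opMap σ).2) hmark

theorem algebra_eq_of_reduct_eq (hpo : IsPushoutSquare φ1 φ2 θ1 θ2) {A B : POAlgebra P'}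
    (h1 : θ1.reduct A = θ1.reduct B) (h2 : θ2.reduct A = θ2.reduct B) : A = B := by
  have hcarrier : A.carrier = B.carrier := funext <| hpo.sort_induction _
    (fun s1 => congrArg (·.carrier s1) h1) (fun s2 => congrArg (·.carrier s2) h2)
  obtain ⟨⟨c, opA⟩, leA, _, _, _⟩ := A
  obtain ⟨⟨c', opB⟩, leB, _, _, _⟩ := B
  subst hcarrier
  obtain rfl : @opA = @opB := by
    funext n ar s σ
    refine hpo.op_induction (fun σ => opA σ = opB σ) (fun σ1 => ?_) (fun σ2 => ?_) σ
    · exact eq_of_heq (congr_arg_heq (fun X => X.op σ1) h1)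
    · exact eq_of_heq (congr_arg_heq (fun X => X.op σ2) h2)
  obtain rfl : leA = leB := by
    funext s hs
    refine hpo.sort_induction (fun s => ∀ hs, leA s hs = leB s hs) (fun s1 hs => ?_)
      (fun s2 hs => ?_) s hs
    · exact congrFun (congrFun (eq_of_heq (congr_arg_heq (·.le) h1)) s1)
        (by rwa [θ1.sys_pres] at hs)
    · exact congrFun (congrFun (eq_of_heq (congr_arg_heq (·.le) h2)) s2)
        (by rwa [θ2.sys_pres] at hs)
  rfl

theorem homObj_eq_of_reductHomObj_eq (hpo : IsPushoutSquare φ1 φ2 θ1 θ2) {H K : HomObj P'}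
    (h1 : θ1.reductHomObj H = θ1.reductHomObj K) (h2 : θ2.reductHomObj H = θ2.reductHomObj K) :
    H = K :=
  HomObj.ext (hpo.algebra_eq_of_reduct_eq (congrArg HomObj.src h1) (congrArg HomObj.src h2))
    (hpo.algebra_eq_of_reduct_eq (congrArg HomObj.tgt h1) (congrArg HomObj.tgt h2))
    (hpo.sort_induction _ (fun s1 => congr_arg_heq (·.hom.toFun s1) h1)
      fun s2 => congr_arg_heq (·.hom.toFun s2) h2)

end IsPushoutSquare

section PreordProbe

variable {P : POASignature}

/-- The preorder of `M` on a system sort, equality on a data sort. -/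
def POAlgebra.preordAt (M : POAlgebra P) (s : P.Sorts) : Preord :=
  @Preord.of (M.carrier s)
    { le a a' := if h : P.isSys s = true then M.le s h a a' else a = a'
      le_refl a := by split_ifs with h; exacts [M.le_refl s h a, rfl]
      le_trans a b c := by split_ifs with h; exacts [M.le_trans s h a b c, Eq.trans] }

theorem POAlgebra.preordAt_le_iff (M : POAlgebra P) {s : P.Sorts} (hs : P.isSys s = true)
    {a a' : M.preordAt s} : a ≤ a' ↔ M.le s hs a a' := by
  change (if h : P.isSys s = true then M.le s h a a' else a = a') ↔ _
  rw [dif_pos hs]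

theorem POAlgebra.le_eq_preordAt_le (M : POAlgebra P) :
    M.le = fun s _ (a a' : M.preordAt s) => a ≤ a' :=
  funext fun _ => funext fun hs => funext fun _ => funext fun _ =>
    propext (M.preordAt_le_iff hs).symm

theorem POASigMorphism.preordAt_reduct {P' : POASignature} (φ : POASigMorphism P P')
    (M : POAlgebra P') (s : P.Sorts) :
    M.preordAt (φ.toMS.sortMap s) = (φ.reduct M).preordAt s := by
  unfold POAlgebra.preordAt
  congr 1
  refine Preorder.ext fun a a' => ?_
  change (if h : _ then _ else _) ↔ (if h : _ then _ else _)
  simp only [φ.sys_pres]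
  rfl

def MonotoneOp {n : ℕ} (X : Fin n → Preord) (Y : Preord) (b : Bool) : Type :=
  {f : (∀ i, X i) → Y // b = true → Monotone f}

def POAlgebra.monotoneOp (M : POAlgebra P) {n : ℕ} {ar : Fin n → P.Sorts} {s : P.Sorts}
    (σ : P.sig.Op n ar s) :
    MonotoneOp (fun i => M.preordAt (ar i)) (M.preordAt s) (P.isSys s) :=
  ⟨M.op σ, fun hs a a' h => (M.preordAt_le_iff hs).2 (M.monotone σ hs a a' h)⟩

def preordProbe (T : Type) (isSys : T → Bool) (K : T → Preord) : POASignature :=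
  ⟨T, isSys, ⟨fun _ ar s => MonotoneOp (fun i => K (ar i)) (K s) (isSys s)⟩⟩

theorem preordProbe.op_heq {T : Type} {isSys : T → Bool} {K : T → Preord} {n : ℕ}
    {ar ar' : Fin n → T} {s s' : T} (har : ar = ar') (hs : s = s')
    {f : (preordProbe T isSys K).sig.Op n ar s} {g : (preordProbe T isSys K).sig.Op n ar' s'}
    (h : HEq f.1 g.1) : HEq f g := by
  subst har hs
  exact heq_of_eq (Subtype.ext (eq_of_heq h))

def POASigMorphism.toAlgebra {T : Type} {isSys : T → Bool} {K : T → Preord}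
    (χ : POASigMorphism P (preordProbe T isSys K)) : POAlgebra P where
  carrier s := K (χ.toMS.sortMap s)
  op σ := (χ.toMS.opMap σ).1
  le _ _ := (· ≤ ·)
  le_refl _ _ := le_refl
  le_trans _ _ _ _ _ := le_trans
  monotone σ hs args args' hargs := by
    refine (χ.toMS.opMap σ).2 ((χ.sys_pres _).trans hs) fun i => ?_
    have hi := hargs i
    split_ifs at hi
    exacts [hi, hi.le]

end PreordProbe

section ArrowProbe

def HomObj.arrowAt {P : POASignature} (H : HomObj P) (s : P.Sorts) : Arrow Preord :=
  Arrow.mk <| Preord.ofHom (X := H.src.preordAt s) (Y := H.tgt.preordAt s)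
    ⟨H.hom.toFun s, fun a a' h => by
      change dite .. at h ⊢
      split_ifs at h ⊢ with hs
      exacts [H.hom.mono s hs a a' h, congrArg _ h]⟩

theorem POASigMorphism.arrowAt_reduct {P P' : POASignature} (φ : POASigMorphism P P')
    (H : HomObj P') (s : P.Sorts) :
    H.arrowAt (φ.toMS.sortMap s) = (φ.reductHomObj H).arrowAt s :=
  Preord.arrow_mk_eq_of_heq (φ.preordAt_reduct H.src s) (φ.preordAt_reduct H.tgt s) HEq.rfl

def arrowProbe (T : Type) (isSys : T → Bool) (K : T → Arrow Preord) : POASignature :=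
  ⟨T, isSys, ⟨fun _ ar s =>
    {p : MonotoneOp (fun i => (K (ar i)).left) (K s).left (isSys s) ×
        MonotoneOp (fun i => (K (ar i)).right) (K s).right (isSys s) //
      ∀ a, (K s).hom (p.1.1 a) = p.2.1 fun i => (K (ar i)).hom (a i)}⟩⟩

namespace arrowProbe

variable {T : Type} {isSys : T → Bool} {K : T → Arrow Preord}

theorem op_heq {n : ℕ} {ar ar' : Fin n → T} {s s' : T} (har : ar = ar') (hs : s = s')
    {f : (arrowProbe T isSys K).sig.Op n ar s} {g : (arrowProbe T isSys K).sig.Op n ar' s'}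
    (hleft : HEq f.1.1.1 g.1.1.1) (hright : HEq f.1.2.1 g.1.2.1) : HEq f g := by
  subst har hs
  exact heq_of_eq (Subtype.ext (Prod.ext (Subtype.ext (eq_of_heq hleft))
    (Subtype.ext (eq_of_heq hright))))

def left : POASigMorphism (arrowProbe T isSys K) (preordProbe T isSys fun t => (K t).left) :=
  ⟨⟨id, fun p => p.1.1⟩, fun _ => rfl⟩

def right : POASigMorphism (arrowProbe T isSys K) (preordProbe T isSys fun t => (K t).right) :=
  ⟨⟨id, fun p => p.1.2⟩, fun _ => rfl⟩

end arrowProbe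

def POASigMorphism.toHomObj {P : POASignature} {T : Type} {isSys : T → Bool}
    {K : T → Arrow Preord} (χ : POASigMorphism P (arrowProbe T isSys K)) : HomObj P where
  src := (χ.comp arrowProbe.left).toAlgebra
  tgt := (χ.comp arrowProbe.right).toAlgebra
  hom :=
    { toFun s := (K (χ.toMS.sortMap s)).hom
      map_op σ := (χ.toMS.opMap σ).2
      mono s _ _ _ h := (K (χ.toMS.sortMap s)).hom.hom.monotone h }

end ArrowProbe

section SortPushout

variable {P P1 P2 : POASignature} (φ1 : POASigMorphism P P1) (φ2 : POASigMorphism P P2)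

/- The sorts of a signature form a `Type`, so a probe cannot have all of `Preord` as its sorts;
the amalgamation probes are indexed by the pushout of the sort sets instead. -/
def SortPushout : Type :=
  Quot fun x y : P1.Sorts ⊕ P2.Sorts =>
    ∃ s, x = .inl (φ1.toMS.sortMap s) ∧ y = .inr (φ2.toMS.sortMap s)

namespace SortPushout

variable {φ1 φ2}

def inl (s : P1.Sorts) : SortPushout φ1 φ2 := Quot.mk _ (.inl s)

def inr (s : P2.Sorts) : SortPushout φ1 φ2 := Quot.mk _ (.inr s)

theorem inl_sortMap (s : P.Sorts) :
    (inl (φ1.toMS.sortMap s) : SortPushout φ1 φ2) = inr (φ2.toMS.sortMap s) :=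
  Quot.sound ⟨s, rfl, rfl⟩

def lift {α : Sort*} (f1 : P1.Sorts → α) (f2 : P2.Sorts → α)
    (h : ∀ s, f1 (φ1.toMS.sortMap s) = f2 (φ2.toMS.sortMap s)) : SortPushout φ1 φ2 → α :=
  Quot.lift (Sum.elim f1 f2) (by rintro _ _ ⟨s, rfl, rfl⟩; exact h s)

def isSys : SortPushout φ1 φ2 → Bool :=
  lift P1.isSys P2.isSys fun s => by rw [φ1.sys_pres, φ2.sys_pres]

end SortPushout

end SortPushout

section AlgebraAmalgamation

variable {P P1 P2 : POASignature} {φ1 : POASigMorphism P P1} {φ2 : POASigMorphism P P2}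
  {M1 : POAlgebra P1} {M2 : POAlgebra P2}

def amalgamationProbe (hred : φ1.reduct M1 = φ2.reduct M2) : POASignature :=
  preordProbe (SortPushout φ1 φ2) SortPushout.isSys <|
    SortPushout.lift M1.preordAt M2.preordAt fun s => by
      rw [φ1.preordAt_reduct, φ2.preordAt_reduct, hred]

namespace amalgamationProbe

def inl (hred : φ1.reduct M1 = φ2.reduct M2) : POASigMorphism P1 (amalgamationProbe hred) :=
  ⟨⟨SortPushout.inl, M1.monotoneOp⟩, fun _ => rfl⟩

def inr (hred : φ1.reduct M1 = φ2.reduct M2) : POASigMorphism P2 (amalgamationProbe hred) :=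
  ⟨⟨SortPushout.inr, M2.monotoneOp⟩, fun _ => rfl⟩

theorem comp_inl_eq_comp_inr (hred : φ1.reduct M1 = φ2.reduct M2) :
    φ1.comp (inl hred) = φ2.comp (inr hred) := by
  refine POASigMorphism.ext (MSSigMorphism.ext (funext SortPushout.inl_sortMap) ?_)
  intro n ar s σ
  exact preordProbe.op_heq (funext fun i => SortPushout.inl_sortMap (ar i))
    (SortPushout.inl_sortMap s) (congr_arg_heq (fun M : POAlgebra P => M.op σ) hred)

theorem toAlgebra_inl (hred : φ1.reduct M1 = φ2.reduct M2) : (inl hred).toAlgebra = M1 :=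
  POAlgebra.ext rfl (heq_of_eq M1.le_eq_preordAt_le.symm)

theorem toAlgebra_inr (hred : φ1.reduct M1 = φ2.reduct M2) : (inr hred).toAlgebra = M2 :=
  POAlgebra.ext rfl (heq_of_eq M2.le_eq_preordAt_le.symm)

end amalgamationProbe

end AlgebraAmalgamation

section HomAmalgamation

variable {P P1 P2 : POASignature} {φ1 : POASigMorphism P P1} {φ2 : POASigMorphism P P2}
  {H1 : HomObj P1} {H2 : HomObj P2}

def homAmalgamationProbe (hred : φ1.reductHomObj H1 = φ2.reductHomObj H2) : POASignature :=
  arrowProbe (SortPushout φ1 φ2) SortPushout.isSys <|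
    SortPushout.lift H1.arrowAt H2.arrowAt fun s => by
      rw [φ1.arrowAt_reduct, φ2.arrowAt_reduct, hred]

namespace homAmalgamationProbe

def inl (hred : φ1.reductHomObj H1 = φ2.reductHomObj H2) :
    POASigMorphism P1 (homAmalgamationProbe hred) :=
  ⟨⟨SortPushout.inl, fun σ => ⟨(H1.src.monotoneOp σ, H1.tgt.monotoneOp σ), H1.hom.map_op σ⟩⟩,
    fun _ => rfl⟩

def inr (hred : φ1.reductHomObj H1 = φ2.reductHomObj H2) :
    POASigMorphism P2 (homAmalgamationProbe hred) :=
  ⟨⟨SortPushout.inr, fun σ => ⟨(H2.src.monotoneOp σ, H2.tgt.monotoneOp σ), H2.hom.map_op σ⟩⟩,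
    fun _ => rfl⟩

theorem comp_inl_eq_comp_inr (hred : φ1.reductHomObj H1 = φ2.reductHomObj H2) :
    φ1.comp (inl hred) = φ2.comp (inr hred) := by
  refine POASigMorphism.ext (MSSigMorphism.ext (funext SortPushout.inl_sortMap) ?_)
  intro n ar s σ
  exact arrowProbe.op_heq (funext fun i => SortPushout.inl_sortMap (ar i))
    (SortPushout.inl_sortMap s) (congr_arg_heq (fun H : HomObj P => H.src.op σ) hred)
    (congr_arg_heq (fun H : HomObj P => H.tgt.op σ) hred)

theorem toHomObj_inl (hred : φ1.reductHomObj H1 = φ2.reductHomObj H2) :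
    (inl hred).toHomObj = H1 :=
  HomObj.ext (POAlgebra.ext rfl (heq_of_eq H1.src.le_eq_preordAt_le.symm))
    (POAlgebra.ext rfl (heq_of_eq H1.tgt.le_eq_preordAt_le.symm)) fun _ => HEq.rfl

theorem toHomObj_inr (hred : φ1.reductHomObj H1 = φ2.reductHomObj H2) :
    (inr hred).toHomObj = H2 :=
  HomObj.ext (POAlgebra.ext rfl (heq_of_eq H2.src.le_eq_preordAt_le.symm))
    (POAlgebra.ext rfl (heq_of_eq H2.tgt.le_eq_preordAt_le.symm)) fun _ => HEq.rfl

end homAmalgamationProbe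

end HomAmalgamation

namespace IsPushoutSquare

variable {P P1 P2 P' : POASignature}
  {φ1 : POASigMorphism P P1} {φ2 : POASigMorphism P P2}
  {θ1 : POASigMorphism P1 P'} {θ2 : POASigMorphism P2 P'}

theorem existsUnique_algebra_amalgamation (hpo : IsPushoutSquare φ1 φ2 θ1 θ2)
    {M1 : POAlgebra P1} {M2 : POAlgebra P2} (hred : φ1.reduct M1 = φ2.reduct M2) :
    ∃! M' : POAlgebra P', θ1.reduct M' = M1 ∧ θ2.reduct M' = M2 := by
  obtain ⟨μ, ⟨hμ1, hμ2⟩, -⟩ := hpo.2 _ _ _ (amalgamationProbe.comp_inl_eq_comp_inr hred)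
  have h1 : θ1.reduct μ.toAlgebra = M1 :=
    (congrArg POASigMorphism.toAlgebra hμ1).trans (amalgamationProbe.toAlgebra_inl hred)
  have h2 : θ2.reduct μ.toAlgebra = M2 :=
    (congrArg POASigMorphism.toAlgebra hμ2).trans (amalgamationProbe.toAlgebra_inr hred)
  exact ⟨μ.toAlgebra, ⟨h1, h2⟩, fun N hN =>
    hpo.algebra_eq_of_reduct_eq (hN.1.trans h1.symm) (hN.2.trans h2.symm)⟩

theorem existsUnique_homObj_amalgamation (hpo : IsPushoutSquare φ1 φ2 θ1 θ2)
    {H1 : HomObj P1} {H2 : HomObj P2} (hred : φ1.reductHomObj H1 = φ2.reductHomObj H2) :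
    ∃! H' : HomObj P', θ1.reductHomObj H' = H1 ∧ θ2.reductHomObj H' = H2 := by
  obtain ⟨μ, ⟨hμ1, hμ2⟩, -⟩ := hpo.2 _ _ _ (homAmalgamationProbe.comp_inl_eq_comp_inr hred)
  have h1 : θ1.reductHomObj μ.toHomObj = H1 :=
    (congrArg POASigMorphism.toHomObj hμ1).trans (homAmalgamationProbe.toHomObj_inl hred)
  have h2 : θ2.reductHomObj μ.toHomObj = H2 :=
    (congrArg POASigMorphism.toHomObj hμ2).trans (homAmalgamationProbe.toHomObj_inr hred)
  exact ⟨μ.toHomObj, ⟨h1, h2⟩, fun N hN =>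
    hpo.homObj_eq_of_reductHomObj_eq (hN.1.trans h1.symm) (hN.2.trans h2.symm)⟩

end IsPushoutSquare

/-- pushout squares of POA signatures are model amalgamation squares. -/
theorem stmt14 {P P1 P2 P' : POASignature}
    (φ1 : POASigMorphism P P1) (φ2 : POASigMorphism P P2)
    (θ1 : POASigMorphism P1 P') (θ2 : POASigMorphism P2 P')
    (hpo : IsPushoutSquare φ1 φ2 θ1 θ2) :
    IsAmalgamationSquare φ1 φ2 θ1 θ2 :=
  ⟨fun _ _ => hpo.existsUnique_algebra_amalgamation,
    fun _ _ => hpo.existsUnique_homObj_amalgamation⟩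
end
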